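/- Let k ≥ 1, let μ ∈ G_k, and for 1 ≤ i ≤ k let μ_i ∈ G_1 denote the i-th marginal of μ (determined by μ_i(X^n) = μ(X_i^n) for all n). The following are equivalent: (1) all mixed coefficients of R_μ vanish, i.e. Cf_{(i_1,…,i_n)}(R_μ) = 0 whenever n ≥ 2 and the indices i_1,…,i_n are not all equal (equivalently, when μ is the distribution of a k-tuple (a_1,…,a_k) in a noncommutative probability space, the elements a_1,…,a_k are freely independent); (2) the LS-transform of μ separates the variables, i.e. there exist one-variable power series u_1,…,u_k with LS_μ(z_1,…,z_k) = u_1(z_1) + ⋯ + u_k(z_k); (3) LS_μ(z_1,…,z_k) = LS_{μ_1}(z_1) + ⋯ + LS_{μ_k}(z_k). -/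

import Mathlib

open scoped TensorProduct

noncomputable section

namespace FreeProb

attribute [local instance] Classical.propDecidable

/-! ### Non-crossing partitions of `{1,…,n}`, modelled as setoids on `Fin n` -/

/-- The partition `0_n` of `Fin n` into singletons. -/
def botS (n : ℕ) : Setoid (Fin n) := ⟨Eq, eq_equivalence⟩

/-- The partition `1_n` of `Fin n` with a single block. -/
def topS (n : ℕ) : Setoid (Fin n) :=
  ⟨fun _ _ => True, ⟨fun _ => trivial, fun _ => trivial, fun _ _ => trivial⟩⟩

/-- A partition is non-crossing if there is no crossing `a < b < c < d` with
`a ∼ c`, `b ∼ d` lying in different blocks. -/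
def IsNC {n : ℕ} (s : Setoid (Fin n)) : Prop :=
  ∀ a b c d : Fin n, a < b → b < c → c < d → s.r a c → s.r b d → s.r a b

/-- The lattice `NC(n)` of non-crossing partitions, ordered by reversed refinement
(the order inherited from the lattice of setoids). -/
abbrev NC (n : ℕ) := {s : Setoid (Fin n) // IsNC s}

instance (n : ℕ) : Finite (Setoid (Fin n)) :=
  Finite.of_injective (fun s => s.r) (by intro s t h; cases s; cases t; cases h; rfl)

noncomputable instance (n : ℕ) : Fintype (Setoid (Fin n)) := Fintype.ofFinite _

noncomputable instance (n : ℕ) : Fintype (NC n) := Fintype.ofFinite _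

/-- `0_n` as a non-crossing partition. -/
def ncBot (n : ℕ) : NC n :=
  ⟨botS n, by
    intro a b c d h1 h2 h3 hac _
    have hac' : a = c := hac
    subst hac'
    exact absurd (h1.trans h2) (lt_irrefl _)⟩

/-- `1_n` as a non-crossing partition. -/
def ncTop (n : ℕ) : NC n := ⟨topS n, fun _ _ _ _ _ _ _ _ _ => trivial⟩

/-- The blocks of a partition, as a finset of finsets. -/
def blocks {n : ℕ} (s : Setoid (Fin n)) : Finset (Finset (Fin n)) :=
  Finset.univ.image fun a => Finset.univ.filter fun b => s.r a b

/-- The next element of the block of `b`, in increasing cyclic order. -/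
def nextFun {n : ℕ} (s : Setoid (Fin n)) (b : Fin n) : Fin n :=
  let B : Finset (Fin n) := Finset.univ.filter fun a => s.r b a
  let A : Finset (Fin n) := B.filter fun a => b < a
  if h : A.Nonempty then A.min' h
  else B.min' ⟨b, Finset.mem_filter.mpr ⟨Finset.mem_univ b, s.iseqv.refl b⟩⟩

/-- The permutation `P_π` associated to a partition `π`: its cycles are the blocks
of `π`, traversed in increasing order.  (The function `nextFun` is indeed bijective,
so the `dite` below always takes its first branch.) -/
def permOf {n : ℕ} (s : Setoid (Fin n)) : Equiv.Perm (Fin n) :=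
  if h : Function.Bijective (nextFun s) then Equiv.ofBijective _ h else 1

/-- The partition of `Fin n` into the cycles (orbits) of a permutation. -/
def cycleSetoid {n : ℕ} (σ : Equiv.Perm (Fin n)) : Setoid (Fin n) :=
  ⟨σ.SameCycle, ⟨fun x => Equiv.Perm.SameCycle.refl σ x, fun h => h.symm, fun h h' => h.trans h'⟩⟩

/-- The Kreweras complement `K(π)`, determined by `P_{K(π)} = P_π⁻¹ * P_{1_n}`. -/
def kreweras {n : ℕ} (s : Setoid (Fin n)) : Setoid (Fin n) :=
  cycleSetoid ((permOf s)⁻¹ * permOf (topS n))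

/-- The relative Kreweras complement `K_t(s)`, determined by `P_{K_t(s)} = P_s⁻¹ * P_t`. -/
def relKreweras {n : ℕ} (s t : Setoid (Fin n)) : Setoid (Fin n) :=
  cycleSetoid ((permOf s)⁻¹ * permOf t)

/-! ### Words, and the Hopf algebra `Y^(k)` -/

/-- Words over the alphabet `{1,…,k}`, encoded as pairs `⟨n, w⟩` with `w : Fin n → Fin k`. -/
abbrev WordIdx (k : ℕ) := Σ n : ℕ, Fin n → Fin k

/-- The commutative polynomial algebra `Y^(k) = ℂ[Y_w : |w| ≥ 2]`. -/
abbrev Yalg (k : ℕ) := MvPolynomial {p : WordIdx k // 2 ≤ p.1} ℂ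

/-- The generator `Y_w`, with the convention `Y_w = 1` for `|w| ≤ 1`. -/
def Ygen {k : ℕ} (p : WordIdx k) : Yalg k :=
  if h : 2 ≤ p.1 then MvPolynomial.X ⟨p, h⟩ else 1

/-- The subword `w|B` of `w` on the positions in `B` (in increasing order). -/
def subword {k n : ℕ} (w : Fin n → Fin k) (B : Finset (Fin n)) : Fin B.card → Fin k :=
  fun i => w (B.orderIsoOfFin rfl i).1

/-- The element `Y_{w;π} = ∏_{B block of π} Y_{w|B}`. -/
def Yprod {k n : ℕ} (w : Fin n → Fin k) (s : Setoid (Fin n)) : Yalg k :=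
  ∏ B ∈ blocks s, Ygen ⟨B.card, subword w B⟩

/-- The comultiplication of `Y^(k)`:
`Δ(Y_w) = ∑_{π ∈ NC(n)} Y_{w;π} ⊗ Y_{w;K(π)}`. -/
def Δk (k : ℕ) : Yalg k →ₐ[ℂ] Yalg k ⊗[ℂ] Yalg k :=
  MvPolynomial.aeval fun q : {p : WordIdx k // 2 ≤ p.1} =>
    ∑ π : NC q.1.1, Yprod q.1.2 π.1 ⊗ₜ[ℂ] Yprod q.1.2 (kreweras π.1)

/-- The counit of `Y^(k)`: `ε(Y_w) = 0` for `|w| ≥ 2`. -/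
def εk (k : ℕ) : Yalg k →ₐ[ℂ] ℂ := MvPolynomial.aeval fun _ => 0

/-- The grading of `Y^(k)` in which `Y_w` is homogeneous of degree `|w| - 1`. -/
def Ycomp (k n : ℕ) : Submodule ℂ (Yalg k) :=
  MvPolynomial.weightedHomogeneousSubmodule ℂ (fun q : {p : WordIdx k // 2 ≤ p.1} => q.1.1 - 1) n

/-! ### Convolution of linear functionals on a bialgebra -/

variable {A : Type} [CommRing A] [Algebra ℂ A]

/-- Convolution `ξη := mult ∘ (ξ ⊗ η) ∘ Δ` of two linear functionals. -/
def convF (D : A →ₐ[ℂ] A ⊗[ℂ] A) (ξ η : A →ₗ[ℂ] ℂ) : A →ₗ[ℂ] ℂ :=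
  LinearMap.mul' ℂ ℂ ∘ₗ TensorProduct.map ξ η ∘ₗ D.toLinearMap

/-- Convolution powers `ξ^m`, with `ξ^0 := e` (the counit). -/
def convPowF (D : A →ₐ[ℂ] A ⊗[ℂ] A) (e ξ : A →ₗ[ℂ] ℂ) : ℕ → (A →ₗ[ℂ] ℂ)
  | 0 => e
  | m + 1 => convF D (convPowF D e ξ m) ξ

/-- `(log η)(x) = -∑_{ℓ ≥ 1} (1/ℓ) (e - η)^ℓ (x)`, the logarithm of a functional `η`
with respect to convolution (`e` is the counit).  On each `x` the sum has only finitely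
many nonzero terms, so the `tsum` below is the honest value. -/
def logFunF (D : A →ₐ[ℂ] A ⊗[ℂ] A) (e η : A →ₗ[ℂ] ℂ) (x : A) : ℂ :=
  -∑' ℓ : ℕ, (1 / ((ℓ : ℂ) + 1)) * convPowF D e (e - η) (ℓ + 1) x

/-! ### Distributions, R-transforms, free multiplicative convolution -/

/-- A distribution (or a family of coefficients of a power series in `k` non-commuting
indeterminates), encoded by its values on all words. -/
abbrev Dist (k : ℕ) := WordIdx k → ℂ

/-- `μ ∈ G_k`: `μ(1) = 1` and `μ(X_i) = 1` for all `i`. -/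
def InG {k : ℕ} (μ : Dist k) : Prop :=
  (∀ w : Fin 0 → Fin k, μ ⟨0, w⟩ = 1) ∧ (∀ w : Fin 1 → Fin k, μ ⟨1, w⟩ = 1)

/-- `Cf_{w;π}(f) = ∏_{B block of π} Cf_{w|B}(f)`, for a coefficient family `α`. -/
def cfPart {k n : ℕ} (α : Dist k) (w : Fin n → Fin k) (s : Setoid (Fin n)) : ℂ :=
  ∏ B ∈ blocks s, α ⟨B.card, subword w B⟩

/-- `α` is (the coefficient family of) the R-transform of `μ`:
the moment–cumulant relations hold. -/
def IsRTransform {k : ℕ} (μ α : Dist k) : Prop :=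
  (∀ w : Fin 0 → Fin k, α ⟨0, w⟩ = 0) ∧
  ∀ (n : ℕ) (w : Fin n → Fin k), 1 ≤ n → μ ⟨n, w⟩ = ∑ π : NC n, cfPart α w π.1

/-- `γ` is the R-transform of the free multiplicative convolution of distributions
with R-transforms `α` and `β`:
`Cf_w(R_{μ⊠ν}) = ∑_{π ∈ NC(n)} Cf_{w;π}(R_μ) Cf_{w;K(π)}(R_ν)`. -/
def IsBoxtimes {k : ℕ} (α β γ : Dist k) : Prop :=
  ∀ (n : ℕ) (w : Fin n → Fin k), 1 ≤ n →
    γ ⟨n, w⟩ = ∑ π : NC n, cfPart α w π.1 * cfPart β w (kreweras π.1)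

/-- The unit `μ_o` of `(G_k, ⊠)`: all moments equal to `1`. -/
def distUnit (k : ℕ) : Dist k := fun _ => 1

/-- The character `χ_μ` of `Y^(k)` associated to a distribution with R-transform `α`:
`χ_μ(Y_w) = Cf_w(R_μ)`. -/
def charOf {k : ℕ} (α : Dist k) : Yalg k →ₐ[ℂ] ℂ :=
  MvPolynomial.aeval fun q => α q.1

/-- The generalized coefficient `Cf_w^(Γ)(f) = ∏_{j=1}^{ℓ} Cf_{w;K_{π_j}(π_{j-1})}(f)`
attached to a (multi-)chain `Γ = (π_0,…,π_{m+1})` in `NC(n)`. -/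
def cfChain {k n : ℕ} (α : Dist k) (w : Fin n → Fin k) (m : ℕ)
    (c : Fin (m + 2) → Setoid (Fin n)) : ℂ :=
  ∏ j : Fin (m + 1), cfPart α w (relKreweras (c j.castSucc) (c j.succ))

/-- The `i`-th marginal coefficients: the free cumulants of the `i`-th marginal `μ_i`
are `Cf_{(i,…,i)}(R_μ)`. -/
def margFam {k : ℕ} (α : Dist k) (i : Fin k) : Dist 1 := fun q => α ⟨q.1, fun _ => i⟩


/-! ### Iterated comultiplication -/

/-- The iterated tensor powers `Y^(k) ⊗ ⋯ ⊗ Y^(k)` (`m+1` factors), as objects of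
`ModuleCat ℂ` so that the recursion carries its module structure. -/
def YpowM (k : ℕ) : ℕ → ModuleCat ℂ
  | 0 => ModuleCat.of ℂ (Yalg k)
  | m + 1 => ModuleCat.of ℂ (Yalg k ⊗[ℂ] YpowM k m)

/-- The iterated comultiplication: `Δiter k m = Δ^{m+1}` in the notation of the paper
(`Δiter k 0 = id`, `Δiter k (m+1) = (id ⊗ Δ^{m+1}) ∘ Δ`). -/
def Δiter (k : ℕ) : ∀ m : ℕ, Yalg k →ₗ[ℂ] YpowM k m
  | 0 => LinearMap.id
  | m + 1 => TensorProduct.map LinearMap.id (Δiter k m) ∘ₗ (Δk k).toLinearMap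

/-- The pure tensor `Y_{w;K_{π_1}(π_0)} ⊗ ⋯ ⊗ Y_{w;K_{π_{m+1}}(π_m)}` attached to a
multi-chain `(π_0, …, π_{m+1})`. -/
def chainTensor {k n : ℕ} (w : Fin n → Fin k) :
    ∀ m : ℕ, (Fin (m + 2) → Setoid (Fin n)) → YpowM k m
  | 0, c => Yprod w (relKreweras (c 0) (c 1))
  | m + 1, c => Yprod w (relKreweras (c 0) (c 1)) ⊗ₜ[ℂ] chainTensor w m (fun i => c i.succ)


/-! ### One-variable power series tools -/

/-- The R-transform of a one-variable distribution, as a power series. -/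
def Rser (α : Dist 1) : PowerSeries ℂ :=
  PowerSeries.mk fun m => if m = 0 then 0 else α ⟨m, fun _ => 0⟩

/-- Composition `f ∘ g` of formal power series (the honest composition whenever
`g` has vanishing constant term). -/
def psComp (f g : PowerSeries ℂ) : PowerSeries ℂ :=
  PowerSeries.mk fun m =>
    ∑ j ∈ Finset.range (m + 1), PowerSeries.coeff j f * PowerSeries.coeff m (g ^ j)

/-- `S` is the S-transform of the distribution with R-transform `α`:
`S(z) = (1/z)·R^{⟨-1⟩}(z)`, i.e. `z·S(z)` is the compositional inverse of `R`. -/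
def SChar (α : Dist 1) (S : PowerSeries ℂ) : Prop :=
  PowerSeries.constantCoeff S = 1 ∧
  psComp (Rser α) (PowerSeries.X * S) = PowerSeries.X ∧
  psComp (PowerSeries.X * S) (Rser α) = PowerSeries.X

/-- The formal logarithm `log f = -∑_{ℓ≥1} (1/ℓ)(1-f)^ℓ = ∑_{ℓ≥1} ((-1)^{ℓ+1}/ℓ)(f-1)^ℓ`
of a power series (the honest logarithm whenever `f` has constant term 1). -/
def psLog {B : Type} [CommRing B] [Algebra ℂ B] (f : PowerSeries B) : PowerSeries B :=
  PowerSeries.mk fun m =>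
    ∑ ℓ ∈ Finset.range (m + 1), ((-1 : ℂ) ^ (ℓ + 1) / ℓ) • PowerSeries.coeff m ((f - 1) ^ ℓ)

/-- The coefficient-wise LS-transform of a one-variable distribution, as a power series. -/
def LSseries (α : Dist 1) : PowerSeries ℂ :=
  PowerSeries.mk fun n =>
    if 2 ≤ n then
      logFunF (Δk 1) (εk 1).toLinearMap (charOf α).toLinearMap (Ygen ⟨n, fun _ => 0⟩)
    else 0

/-! ### The Hopf algebra `Sym` of symmetric functions -/

/-- `Sym`, realized as the free commutative algebra on the complete homogeneous
symmetric functions `h_1, h_2, …`. -/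
abbrev SymA := MvPolynomial {m : ℕ // 1 ≤ m} ℂ

/-- The complete homogeneous symmetric function `h_m` (with `h_0 = 1`). -/
def Hgen (m : ℕ) : SymA := if h : 1 ≤ m then MvPolynomial.X ⟨m, h⟩ else 1

/-- The comultiplication of `Sym`: `Δ(h_n) = ∑_{i=0}^n h_i ⊗ h_{n-i}`. -/
def ΔSym : SymA →ₐ[ℂ] SymA ⊗[ℂ] SymA :=
  MvPolynomial.aeval fun q : {m : ℕ // 1 ≤ m} =>
    ∑ i ∈ Finset.range (q.1 + 1), Hgen i ⊗ₜ[ℂ] Hgen (q.1 - i)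

/-- The counit of `Sym`. -/
def εSym : SymA →ₐ[ℂ] ℂ := MvPolynomial.aeval fun _ => 0

/-- The generating series `h(z) = 1 + ∑ (-1)^n h_n z^n`. -/
def hSymSeries : PowerSeries SymA :=
  PowerSeries.mk fun m => if m = 0 then 1 else (-1 : SymA) ^ m * Hgen m

/-- The generating series `e(z) = 1 + ∑ e_n z^n = 1/h(z)`. -/
def eSymSeries : PowerSeries SymA := PowerSeries.invOfUnit hSymSeries 1

/-- The elementary symmetric function `e_m`, defined through `e(z) = 1/h(z)`. -/
def eSym (m : ℕ) : SymA := PowerSeries.coeff m eSymSeries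

/-- The power sum symmetric function `p_m`, defined through
`log e(z) = ∑_{m≥1} ((-1)^{m+1}/m) p_m z^m`. -/
def pSym (m : ℕ) : SymA :=
  ((-1 : ℂ) ^ (m + 1) * m) • PowerSeries.coeff m (psLog eSymSeries)

/-- The grading of `Sym` (`h_n` homogeneous of degree `n`). -/
def SymComp (n : ℕ) : Submodule ℂ SymA :=
  MvPolynomial.weightedHomogeneousSubmodule ℂ (fun q : {m : ℕ // 1 ≤ m} => q.1) n

/-- The symmetric function `y_n = ∑_{π ∈ NC(n-1)} ∏_{B block of π} e_{|B|}`. -/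
def ySym (n : ℕ) : SymA := ∑ π : NC (n - 1), ∏ B ∈ blocks π.1, eSym B.card

/-- The homomorphism `Φ : Y^(1) → Sym`, `Φ(Y_n) = y_n`. -/
def Phi : Yalg 1 →ₐ[ℂ] SymA := MvPolynomial.aeval fun q => ySym q.1.1

/-- The character `θ_μ` of `Sym` attached to a distribution with S-transform `S`:
`θ_μ(h_n) = (-1)^n β_n` where `S(z) = 1 + ∑ β_n z^n`. -/
def thetaOf (S : PowerSeries ℂ) : SymA →ₐ[ℂ] ℂ :=
  MvPolynomial.aeval fun q : {m : ℕ // 1 ≤ m} =>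
    (-1 : ℂ) ^ q.1 * PowerSeries.coeff q.1 S

/-- Infinitesimal characters of `Sym`. -/
def IsInfCharSym (ξ : SymA →ₗ[ℂ] ℂ) : Prop :=
  ∀ u v : SymA, ξ (u * v) = ξ u * εSym v + εSym u * ξ v

/-!
Write `ξ = ε - χ_μ`, so that `log χ_μ = -∑_ℓ ξ^ℓ / ℓ`. Call a word mixed if its letters are not
all equal. For every `π ∈ NC(n)` the blocks of `π` and `K(π)` together connect `{1,…,n}`, so for
a mixed word `w` one of `Y_{w;π}`, `Y_{w;K(π)}` contains a factor `Y_v` with `v` a mixed subword.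
Hence the ideal generated by the `Y_v` with `v` mixed satisfies `Δ(I) ⊆ I ⊗ Y + Y ⊗ I`. If the
mixed coefficients of `R_μ` vanish, then `ε` and `χ_μ` vanish on `I`, hence so does every `ξ^ℓ`,
and so do the mixed coefficients of `LS_μ`. Conversely, for mixed `w` of length `n` the terms
`ξ^ℓ(Y_w)` with `ℓ ≥ 2` only involve mixed coefficients of order `< n`. This uses that
`K(π) ≠ 1_n` for non-crossing `π ≠ 0_n`. So by induction `(log χ_μ)(Y_w) = Cf_w(R_μ)`.
The marginals come in through the bialgebra map `Y^(1) → Y^(k)`, `Y_n ↦ Y_{(i,…,i)}`. It pulls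
`χ_μ` back to `χ_{μ_i}`.
-/

open Finset

section Partitions

variable {n : ℕ}

lemma nextFun_rel (s : Setoid (Fin n)) (b : Fin n) : s.r b (nextFun s b) := by
  dsimp only [nextFun]
  split_ifs with h
  · exact (mem_filter.1 (mem_of_mem_filter _ (min'_mem _ h))).2
  · exact (mem_filter.1 (min'_mem _ _)).2

lemma lt_nextFun_le {s : Setoid (Fin n)} {b a : Fin n} (hr : s.r b a) (hlt : b < a) :
    b < nextFun s b ∧ nextFun s b ≤ a := by
  have hA : ((univ.filter fun a => s.r b a).filter fun a => b < a).Nonempty :=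
    ⟨a, by simp [hr, hlt]⟩
  dsimp only [nextFun]
  rw [dif_pos hA]
  exact ⟨(mem_filter.1 (min'_mem _ hA)).2, min'_le _ _ (by simp [hr, hlt])⟩

lemma nextFun_le_of_forall_le {s : Setoid (Fin n)} {b : Fin n} (h : ∀ a, s.r b a → a ≤ b)
    {a : Fin n} (hr : s.r b a) : nextFun s b ≤ a := by
  have hA : ¬ ((univ.filter fun a => s.r b a).filter fun a => b < a).Nonempty := by
    rintro ⟨c, hc⟩
    simp only [mem_filter, mem_univ, true_and] at hc
    exact (h c hc.1).not_gt hc.2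
  dsimp only [nextFun]
  rw [dif_neg hA]
  exact min'_le _ _ (by simp [hr])

lemma nextFun_injective (s : Setoid (Fin n)) : Function.Injective (nextFun s) := by
  have key : ∀ x y, x < y → s.r x y → nextFun s x ≠ nextFun s y := by
    intro x y hlt hr heq
    obtain ⟨hx, hxy⟩ := lt_nextFun_le hr hlt
    by_cases hy : ∃ a, s.r y a ∧ y < a
    · obtain ⟨a, hra, hya⟩ := hy
      exact (hxy.trans_lt (lt_nextFun_le hra hya).1).ne heq
    · push Not at hy
      exact (nextFun_le_of_forall_le hy (s.iseqv.symm hr)).not_gt (heq ▸ hx)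
  intro x y heq
  have hr : s.r x y := s.iseqv.trans (nextFun_rel s x) (s.iseqv.symm (heq ▸ nextFun_rel s y))
  rcases lt_trichotomy x y with h | h | h
  · exact absurd heq (key x y h hr)
  · exact h
  · exact absurd heq.symm (key y x h (s.iseqv.symm hr))

lemma permOf_apply (s : Setoid (Fin n)) (x : Fin n) : permOf s x = nextFun s x := by
  rw [permOf, dif_pos (Finite.injective_iff_bijective.mp (nextFun_injective s))]
  rfl

lemma permOf_rel (s : Setoid (Fin n)) (x : Fin n) : s.r x (permOf s x) := by
  rw [permOf_apply]
  exact nextFun_rel s x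

lemma lt_permOf_le {s : Setoid (Fin n)} {a z : Fin n} (hr : s.r a z) (hlt : a < z) :
    a < permOf s a ∧ permOf s a ≤ z := by
  rw [permOf_apply]
  exact lt_nextFun_le hr hlt

lemma permOf_topS (n : ℕ) : permOf (topS (n + 1)) = finRotate (n + 1) := by
  ext x : 1
  rw [permOf_apply, finRotate_apply]
  by_cases hx : x = Fin.last n
  · subst hx
    rw [Fin.last_add_one]
    exact le_antisymm (nextFun_le_of_forall_le (fun a _ => Fin.le_last a) trivial) (Fin.zero_le _)
  · have hlt : x < x + 1 := Fin.lt_add_one_iff.mpr (Fin.lt_last_iff_ne_last.mpr hx)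
    obtain ⟨h1, h2⟩ := lt_nextFun_le (s := topS (n + 1)) trivial hlt
    exact le_antisymm h2 (Fin.add_one_le_of_lt h1)

lemma permOf_botS : permOf (botS n) = 1 := by
  ext x : 1
  rw [permOf_apply]
  exact (nextFun_rel (botS n) x).symm

lemma cycleSetoid_one : cycleSetoid (1 : Equiv.Perm (Fin n)) = botS n :=
  Setoid.ext fun _ _ => Equiv.Perm.sameCycle_one

lemma cycleSetoid_permOf_topS : cycleSetoid (permOf (topS n)) = topS n := by
  refine Setoid.ext fun x y => iff_of_true ?_ trivial
  match n, x, y with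
  | 1, x, y => exact Subsingleton.elim x y ▸ Equiv.Perm.SameCycle.refl _ _
  | m + 2, x, y =>
    rw [permOf_topS]
    exact isCycle_finRotate.sameCycle (Equiv.Perm.mem_support.mp (by simp))
      (Equiv.Perm.mem_support.mp (by simp))

lemma kreweras_topS : kreweras (topS n) = botS n := by
  rw [kreweras, inv_mul_cancel, cycleSetoid_one]

lemma kreweras_botS : kreweras (botS n) = topS n := by
  rw [kreweras, permOf_botS, inv_one, one_mul, cycleSetoid_permOf_topS]

lemma exists_rel_lt_of_ne_botS {s : Setoid (Fin n)} (hs : s ≠ botS n) :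
    ∃ x y, s.r x y ∧ x < y := by
  by_contra! h
  exact hs (Setoid.ext fun x y => ⟨fun hr => le_antisymm (h y x (s.iseqv.symm hr)) (h x y hr),
    fun e => e ▸ s.iseqv.refl x⟩)

lemma block_mem_blocks (s : Setoid (Fin n)) (x : Fin n) :
    (univ.filter fun y => s.r x y) ∈ blocks s :=
  mem_image_of_mem _ (mem_univ x)

lemma card_block_lt {s : Setoid (Fin n)} (hs : s ≠ topS n) (x : Fin n) :
    (univ.filter fun y => s.r x y).card < n := by
  have hle : (univ.filter fun y => s.r x y).card ≤ n :=
    (card_le_univ _).trans_eq (Fintype.card_fin n)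
  refine hle.lt_of_ne fun h => hs (Setoid.ext fun a b => iff_of_true ?_ trivial)
  have hall : ∀ z, s.r x z := fun z =>
    (mem_filter.1 (eq_univ_of_card _ (h.trans (Fintype.card_fin n).symm) ▸ mem_univ z)).2
  exact s.iseqv.trans (s.iseqv.symm (hall a)) (hall b)

end Partitions

section Kreweras

variable {n : ℕ}

lemma cycleSetoid_le {σ : Equiv.Perm (Fin n)} {t : Setoid (Fin n)} (h : ∀ x, t.r x (σ x)) :
    cycleSetoid σ ≤ t := by
  rintro x _ hxy
  obtain ⟨i, rfl⟩ := Equiv.Perm.SameCycle.exists_nat_pow_eq hxy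
  clear hxy
  induction i with
  | zero => exact t.iseqv.refl x
  | succ i ih => exact t.iseqv.trans ih (by rw [pow_succ', Equiv.Perm.mul_apply]; exact h _)

/-- `P_{1_n} = P_s ∘ P_{K(s)}` is a single cycle, so the blocks of `s` and `K(s)` together
connect everything. -/
lemma sup_kreweras (s : Setoid (Fin n)) : s ⊔ kreweras s = topS n := by
  refine le_antisymm (fun _ _ _ => trivial) ?_
  rw [← cycleSetoid_permOf_topS]
  refine cycleSetoid_le fun x => ?_
  set τ := (permOf s)⁻¹ * permOf (topS n)
  have hx : permOf (topS n) x = permOf s (τ x) := by simp [τ]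
  rw [hx]
  exact (s ⊔ kreweras s).iseqv.trans (Setoid.le_def.1 le_sup_right ⟨1, by rw [zpow_one]⟩)
    (Setoid.le_def.1 le_sup_left (permOf_rel s (τ x)))

/-- `P_s a` is the next element of the block of `a`; by non-crossing, a block of `s` that meets
the interval `(a, P_s a)` stays inside it. -/
lemma mapsTo_Ico_kreweras {s : Setoid (Fin (n + 1))} (hs : IsNC s) {a : Fin (n + 1)}
    (hab : a < permOf s a) :
    Set.MapsTo ((permOf s)⁻¹ * permOf (topS (n + 1))) (Set.Ico a (permOf s a))
      (Set.Ico a (permOf s a)) := by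
  set b := permOf s a
  have hrab : s.r a b := permOf_rel s a
  rintro u ⟨hau, hub⟩
  set v := ((permOf s)⁻¹ * permOf (topS (n + 1))) u
  have hv : permOf s v = u + 1 := by simp [v, permOf_topS, finRotate_apply]
  have hrel : s.r v (u + 1) := hv ▸ permOf_rel s v
  have hu1 : u < u + 1 := Fin.lt_add_one_iff.mpr (hub.trans_le (Fin.le_last b))
  rcases (Fin.add_one_le_of_lt hub).eq_or_lt with hb | hb
  · have : v = a := (permOf s).injective (hv.trans hb)
    exact ⟨this.ge, this ▸ hab⟩
  have hnot : ¬ s.r a (u + 1) := fun h =>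
    (lt_permOf_le h (hau.trans_lt hu1)).2.not_gt hb
  refine ⟨not_lt.mp fun hva => hnot ?_, lt_of_not_ge fun hbv => hnot ?_⟩
  · exact s.iseqv.trans (s.iseqv.symm (hs v a (u + 1) b hva (hau.trans_lt hu1) hb hrel hrab)) hrel
  · rcases hbv.eq_or_lt with hbv | hbv
    · exact s.iseqv.trans hrab (by rwa [hbv])
    · exact hs a (u + 1) b v (hau.trans_lt hu1) hb hbv hrab (s.iseqv.symm hrel)

lemma kreweras_ne_topS {s : Setoid (Fin n)} (hs : IsNC s) (hne : s ≠ botS n) :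
    kreweras s ≠ topS n := by
  obtain ⟨x, y, hr, hxy⟩ := exists_rel_lt_of_ne_botS hne
  cases n with
  | zero => exact x.elim0
  | succ n =>
    intro hK
    have hab := (lt_permOf_le hr hxy).1
    obtain ⟨i, hi⟩ := Equiv.Perm.SameCycle.exists_nat_pow_eq
      (show (kreweras s).r x (permOf s x) from hK ▸ trivial)
    have := (mapsTo_Ico_kreweras hs hab).perm_pow i ⟨le_rfl, hab⟩
    rw [hi] at this
    exact lt_irrefl _ this.2

end Kreweras

section Convolution

open Algebra.TensorProduct in
def tensorIdeal (I : Ideal A) : Ideal (A ⊗[ℂ] A) :=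
  I.map (includeLeft : A →ₐ[ℂ] A ⊗[ℂ] A) ⊔ I.map (includeRight : A →ₐ[ℂ] A ⊗[ℂ] A)

lemma tmul_mem_tensorIdeal_of_left {I : Ideal A} {a : A} (ha : a ∈ I) (b : A) :
    a ⊗ₜ[ℂ] b ∈ tensorIdeal I := by
  rw [← mul_one a, ← one_mul b, ← Algebra.TensorProduct.tmul_mul_tmul]
  exact Ideal.mem_sup_left (Ideal.mul_mem_right _ _ (Ideal.mem_map_of_mem _ ha))

lemma tmul_mem_tensorIdeal_of_right {I : Ideal A} (a : A) {b : A} (hb : b ∈ I) :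
    a ⊗ₜ[ℂ] b ∈ tensorIdeal I := by
  rw [← mul_one a, ← one_mul b, ← Algebra.TensorProduct.tmul_mul_tmul]
  exact Ideal.mem_sup_right (Ideal.mul_mem_left _ _ (Ideal.mem_map_of_mem _ hb))

lemma mul'_map_eq_zero_of_mem_tensorIdeal {I : Ideal A} {P ξ : A →ₗ[ℂ] ℂ}
    (hP : ∀ a ∈ I, P a = 0) (hξ : ∀ a ∈ I, ξ a = 0) {t : A ⊗[ℂ] A} (ht : t ∈ tensorIdeal I) :
    LinearMap.mul' ℂ ℂ (TensorProduct.map P ξ t) = 0 := by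
  replace ht : t ∈ (tensorIdeal I).restrictScalars ℂ := ht
  rw [tensorIdeal, Submodule.restrictScalars_sup, Ideal.map_includeLeft_eq,
    Ideal.map_includeRight_eq, Submodule.mem_sup] at ht
  obtain ⟨_, ⟨t₁, rfl⟩, _, ⟨t₂, rfl⟩, rfl⟩ := ht
  have hP' : P ∘ₗ (I.restrictScalars ℂ).subtype = 0 := LinearMap.ext fun a => hP a a.2
  have hξ' : ξ ∘ₗ (I.restrictScalars ℂ).subtype = 0 := LinearMap.ext fun a => hξ a a.2
  rw [map_add, LinearMap.map_rTensor, LinearMap.map_lTensor, hP', hξ',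
    TensorProduct.map_zero_left, TensorProduct.map_zero_right]
  simp

variable {D : A →ₐ[ℂ] A ⊗[ℂ] A}

lemma convPowF_eq_zero_of_mem {I : Ideal A} (hD : ∀ x ∈ I, D x ∈ tensorIdeal I)
    {e ξ : A →ₗ[ℂ] ℂ} (he : ∀ a ∈ I, e a = 0) (hξ : ∀ a ∈ I, ξ a = 0) (m : ℕ) {x : A}
    (hx : x ∈ I) : convPowF D e ξ m x = 0 := by
  induction m generalizing x with
  | zero => exact he x hx
  | succ m ih => exact mul'_map_eq_zero_of_mem_tensorIdeal (fun a ha => ih ha) hξ (hD x hx)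

lemma convF_apply_of_eq_sum (ξ η : A →ₗ[ℂ] ℂ) {x : A} {ι : Type*} {s : Finset ι} {f g : ι → A}
    (hx : D x = ∑ i ∈ s, f i ⊗ₜ[ℂ] g i) : convF D ξ η x = ∑ i ∈ s, ξ (f i) * η (g i) := by
  simp [convF, hx]

lemma convPowF_succ_apply_one (e : A →ₗ[ℂ] ℂ) {ξ : A →ₗ[ℂ] ℂ} (hξ : ξ 1 = 0) (m : ℕ) :
    convPowF D e ξ (m + 1) 1 = 0 := by
  simp [convPowF, convF, Algebra.TensorProduct.one_def, hξ]

variable {B : Type} [CommRing B] [Algebra ℂ B] {D' : B →ₐ[ℂ] B ⊗[ℂ] B} {φ : A →ₐ[ℂ] B}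

lemma convPowF_comp (hφ : D'.comp φ = (Algebra.TensorProduct.map φ φ).comp D)
    (e ξ : B →ₗ[ℂ] ℂ) (m : ℕ) :
    convPowF D' e ξ m ∘ₗ φ.toLinearMap =
      convPowF D (e ∘ₗ φ.toLinearMap) (ξ ∘ₗ φ.toLinearMap) m := by
  induction m with
  | zero => rfl
  | succ m ih =>
    simp only [convPowF, convF, LinearMap.comp_assoc, ← AlgHom.comp_toLinearMap, hφ]
    rw [AlgHom.comp_toLinearMap, Algebra.TensorProduct.toLinearMap_map, ← ih,
      ← LinearMap.comp_assoc, ← LinearMap.comp_assoc, ← LinearMap.comp_assoc,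
      TensorProduct.map_comp]
    rfl

lemma logFunF_comp (hφ : D'.comp φ = (Algebra.TensorProduct.map φ φ).comp D)
    (e η : B →ₗ[ℂ] ℂ) (x : A) :
    logFunF D' e η (φ x) = logFunF D (e ∘ₗ φ.toLinearMap) (η ∘ₗ φ.toLinearMap) x := by
  simp only [logFunF, ← LinearMap.sub_comp, ← convPowF_comp hφ]
  rfl

end Convolution

section Words

variable {k n : ℕ}

def IsMixed (w : Fin n → Fin k) : Prop := ¬ ∃ i, ∀ j, w j = i

lemma exists_rel_ne_of_isMixed (hn : 0 < n) {w : Fin n → Fin k} (hw : IsMixed w)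
    (s : Setoid (Fin n)) :
    (∃ x y, s.r x y ∧ w x ≠ w y) ∨ ∃ x y, (kreweras s).r x y ∧ w x ≠ w y := by
  by_contra! h
  have hle : s ⊔ kreweras s ≤ Setoid.ker w :=
    sup_le (Setoid.le_def.2 fun hr => h.1 _ _ hr) (Setoid.le_def.2 fun hr => h.2 _ _ hr)
  rw [sup_kreweras] at hle
  exact hw ⟨w ⟨0, hn⟩, fun j => Setoid.le_def.1 hle (trivial : (topS n).r j ⟨0, hn⟩)⟩

lemma isMixed_subword {w : Fin n → Fin k} {B : Finset (Fin n)} {x y : Fin n} (hx : x ∈ B)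
    (hy : y ∈ B) (hne : w x ≠ w y) : IsMixed (subword w B) := by
  rintro ⟨i, hi⟩
  have hsub : ∀ z (hz : z ∈ B), w z = i := fun z hz => by
    simpa [subword] using hi ((B.orderIsoOfFin rfl).symm ⟨z, hz⟩)
  exact hne ((hsub x hx).trans (hsub y hy).symm)

lemma Ygen_of_lt_two {p : WordIdx k} (h : p.1 < 2) : Ygen p = 1 := dif_neg (by omega)

lemma Ygen_of_two_le {p : WordIdx k} (h : 2 ≤ p.1) : Ygen p = MvPolynomial.X ⟨p, h⟩ := dif_pos h

lemma Yprod_botS (w : Fin n → Fin k) : Yprod w (botS n) = 1 := by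
  refine prod_eq_one fun B hB => Ygen_of_lt_two (Nat.lt_succ_of_le ?_)
  obtain ⟨a, -, rfl⟩ := mem_image.1 hB
  show (univ.filter fun b => (botS n).r a b).card ≤ 1
  refine card_le_one.2 fun b hb c hc => ?_
  have hab : a = b := (mem_filter.1 hb).2
  have hac : a = c := (mem_filter.1 hc).2
  exact hab.symm.trans hac

lemma blocks_topS [NeZero n] : blocks (topS n) = {univ} := by
  have : (fun a : Fin n => univ.filter fun b => (topS n).r a b) = fun _ => univ :=
    funext fun _ => filter_true_of_mem fun _ _ => trivial
  rw [blocks, this]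
  exact image_const univ_nonempty _

lemma subword_univ (w : Fin n → Fin k) :
    (⟨(univ : Finset (Fin n)).card, subword w univ⟩ : WordIdx k) = ⟨n, w⟩ := by
  have h : subword w univ = w ∘ Fin.cast (card_fin n) := by
    funext j
    exact congrArg w (congrFun (orderEmbOfFin_unique rfl (fun _ => mem_univ _)
      (Fin.cast_strictMono (card_fin n))).symm j)
  rw [h]
  generalize_proofs e
  revert e
  generalize (univ : Finset (Fin n)).card = m
  rintro rfl
  rfl

lemma Yprod_topS [NeZero n] (w : Fin n → Fin k) : Yprod w (topS n) = Ygen ⟨n, w⟩ := by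
  rw [Yprod, blocks_topS, prod_singleton, subword_univ]

end Words

section MixedIdeal

variable {k n N : ℕ}

lemma εk_Ygen {p : WordIdx k} (h : 2 ≤ p.1) : εk k (Ygen p) = 0 := by
  simp [Ygen_of_two_le h, εk]

lemma charOf_Ygen (α : Dist k) {p : WordIdx k} (h : 2 ≤ p.1) : charOf α (Ygen p) = α p := by
  simp [Ygen_of_two_le h, charOf]

lemma Δk_Ygen (hn : 2 ≤ n) (w : Fin n → Fin k) :
    Δk k (Ygen ⟨n, w⟩) = ∑ π : NC n, Yprod w π.1 ⊗ₜ[ℂ] Yprod w (kreweras π.1) := by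
  simp [Ygen_of_two_le (p := ⟨n, w⟩) hn, Δk]

lemma εk_Yprod {s : Setoid (Fin n)} {x y : Fin n} (hr : s.r x y) (hxy : x ≠ y)
    (w : Fin n → Fin k) : εk k (Yprod w s) = 0 := by
  rw [Yprod, map_prod]
  refine prod_eq_zero (block_mem_blocks s x) (εk_Ygen ?_)
  exact one_lt_card.2 ⟨x, mem_filter.2 ⟨mem_univ x, s.iseqv.refl x⟩, y,
    mem_filter.2 ⟨mem_univ y, hr⟩, hxy⟩

def mixedIdeal (k N : ℕ) : Ideal (Yalg k) :=
  Ideal.span (MvPolynomial.X '' {q | IsMixed q.1.2 ∧ q.1.1 < N})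

lemma Yprod_mem_mixedIdeal {s : Setoid (Fin n)} {w : Fin n → Fin k} {x y : Fin n}
    (hr : s.r x y) (hne : w x ≠ w y) (hN : (univ.filter fun z => s.r x z).card < N) :
    Yprod w s ∈ mixedIdeal k N := by
  set B := univ.filter fun z => s.r x z
  have hx : x ∈ B := mem_filter.2 ⟨mem_univ x, s.iseqv.refl x⟩
  have hy : y ∈ B := mem_filter.2 ⟨mem_univ y, hr⟩
  have h2 : 2 ≤ B.card := one_lt_card.2 ⟨x, hx, y, hy, fun h => hne (congrArg w h)⟩
  rw [Yprod, ← mul_prod_erase _ _ (block_mem_blocks s x)]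
  refine Ideal.mul_mem_right _ _ (Ideal.subset_span ⟨⟨⟨B.card, subword w B⟩, h2⟩,
    ⟨isMixed_subword hx hy hne, hN⟩, ?_⟩)
  exact (Ygen_of_two_le (p := ⟨B.card, subword w B⟩) h2).symm

lemma mixedIdeal_le_ker {f : Yalg k →ₐ[ℂ] ℂ}
    (hf : ∀ q : {p : WordIdx k // 2 ≤ p.1}, IsMixed q.1.2 → q.1.1 < N → f (MvPolynomial.X q) = 0) :
    mixedIdeal k N ≤ RingHom.ker f :=
  Ideal.span_le.2 <| Set.image_subset_iff.2 fun q hq => hf q hq.1 hq.2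

lemma Δk_mem_tensorIdeal_mixedIdeal {x : Yalg k} (hx : x ∈ mixedIdeal k N) :
    Δk k x ∈ tensorIdeal (mixedIdeal k N) := by
  refine Ideal.mem_comap.1 ((Ideal.span_le.2 (Set.image_subset_iff.2 ?_) :
    mixedIdeal k N ≤ Ideal.comap (Δk k) _) hx)
  rintro ⟨⟨m, w⟩, h2⟩ ⟨hw, hm⟩
  simp only [Set.mem_preimage, SetLike.mem_coe, Ideal.mem_comap]
  rw [← Ygen_of_two_le (p := ⟨m, w⟩) h2, Δk_Ygen h2]
  refine Ideal.sum_mem _ fun π _ => ?_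
  have hcard : ∀ (s : Setoid (Fin m)) x, (univ.filter fun z => s.r x z).card < N :=
    fun s x => ((card_le_univ _).trans_eq (Fintype.card_fin m)).trans_lt hm
  rcases exists_rel_ne_of_isMixed (zero_lt_two.trans_le h2) hw π.1 with
    ⟨x, y, hr, hne⟩ | ⟨x, y, hr, hne⟩
  · exact tmul_mem_tensorIdeal_of_left (Yprod_mem_mixedIdeal hr hne (hcard _ x)) _
  · exact tmul_mem_tensorIdeal_of_right _ (Yprod_mem_mixedIdeal hr hne (hcard _ x))

end MixedIdeal

section LogCoefficients

variable {k n N : ℕ} {α : Dist k}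

def MixedCoeffsVanishBelow (α : Dist k) (N : ℕ) : Prop :=
  ∀ m (w : Fin m → Fin k), 2 ≤ m → IsMixed w → m < N → α ⟨m, w⟩ = 0

lemma εk_eq_zero_of_mem_mixedIdeal {x : Yalg k} (hx : x ∈ mixedIdeal k N) : εk k x = 0 :=
  mixedIdeal_le_ker (fun _ _ _ => by simp [εk]) hx

lemma charOf_eq_zero_of_mem_mixedIdeal
    (hα : MixedCoeffsVanishBelow α N)
    {x : Yalg k} (hx : x ∈ mixedIdeal k N) : charOf α x = 0 :=
  mixedIdeal_le_ker (fun q hq hN => by simpa [charOf] using hα _ q.1.2 q.2 hq hN) hx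

lemma convPowF_eq_zero_of_mem_mixedIdeal
    (hα : MixedCoeffsVanishBelow α N)
    (j : ℕ) {x : Yalg k} (hx : x ∈ mixedIdeal k N) :
    convPowF (Δk k) (εk k).toLinearMap ((εk k).toLinearMap - (charOf α).toLinearMap) j x = 0 :=
  convPowF_eq_zero_of_mem (fun _ => Δk_mem_tensorIdeal_mixedIdeal)
    (fun _ => εk_eq_zero_of_mem_mixedIdeal)
    (fun _ ha => by simp [εk_eq_zero_of_mem_mixedIdeal ha, charOf_eq_zero_of_mem_mixedIdeal hα ha])
    j hx

lemma convPowF_one_Ygen (hn : 2 ≤ n) (w : Fin n → Fin k) :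
    convPowF (Δk k) (εk k).toLinearMap ((εk k).toLinearMap - (charOf α).toLinearMap) 1
      (Ygen ⟨n, w⟩) = -α ⟨n, w⟩ := by
  have : NeZero n := ⟨by omega⟩
  rw [convPowF, convF_apply_of_eq_sum _ _ (Δk_Ygen hn w), sum_eq_single (ncBot n)]
  · simp [convPowF, ncBot, Yprod_botS, kreweras_botS, Yprod_topS, εk_Ygen, charOf_Ygen, hn]
  · intro π _ hπ
    obtain ⟨x, y, hr, hxy⟩ := exists_rel_lt_of_ne_botS fun h => hπ (Subtype.ext h)
    simp [convPowF, εk_Yprod hr hxy.ne]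
  · simp

/-- The sum over `NC(n)` in `(ε - χ)^{j+2}(Y_w)` vanishes term by term: by `sup_kreweras`
either `π` or `K(π)` has a block on which `w` is not constant. -/
lemma convPowF_Ygen_eq_zero
    (hα : MixedCoeffsVanishBelow α n)
    (hn : 2 ≤ n) {w : Fin n → Fin k} (hw : IsMixed w) (j : ℕ) :
    convPowF (Δk k) (εk k).toLinearMap ((εk k).toLinearMap - (charOf α).toLinearMap) (j + 2)
      (Ygen ⟨n, w⟩) = 0 := by
  have hξ1 : ((εk k).toLinearMap - (charOf α).toLinearMap) 1 = 0 := by simp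
  rw [convPowF, convF_apply_of_eq_sum _ _ (Δk_Ygen hn w)]
  refine sum_eq_zero fun π _ => ?_
  by_cases hbot : π.1 = botS n
  · rw [hbot, Yprod_botS, convPowF_succ_apply_one _ hξ1, zero_mul]
  by_cases htop : π.1 = topS n
  · rw [htop, kreweras_topS, Yprod_botS, hξ1, mul_zero]
  rcases exists_rel_ne_of_isMixed (by omega) hw π.1 with ⟨x, y, hr, hne⟩ | ⟨x, y, hr, hne⟩
  · rw [convPowF_eq_zero_of_mem_mixedIdeal hα _
      (Yprod_mem_mixedIdeal hr hne (card_block_lt htop x)), zero_mul]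
  · have hx := Yprod_mem_mixedIdeal hr hne (card_block_lt (kreweras_ne_topS π.2 hbot) x)
    simp [εk_eq_zero_of_mem_mixedIdeal hx, charOf_eq_zero_of_mem_mixedIdeal hα hx]

lemma logFunF_Ygen_of_isMixed
    (hα : MixedCoeffsVanishBelow α n)
    (hn : 2 ≤ n) {w : Fin n → Fin k} (hw : IsMixed w) :
    logFunF (Δk k) (εk k).toLinearMap (charOf α).toLinearMap (Ygen ⟨n, w⟩) = α ⟨n, w⟩ := by
  rw [logFunF, tsum_eq_single 0 fun j hj => ?_]
  · simp [convPowF_one_Ygen hn]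
  · obtain ⟨j, rfl⟩ := Nat.exists_eq_succ_of_ne_zero hj
    rw [convPowF_Ygen_eq_zero hα hn hw, mul_zero]

theorem isMixed_eq_zero_iff_logFunF_Ygen :
    (∀ n (w : Fin n → Fin k), 2 ≤ n → IsMixed w → α ⟨n, w⟩ = 0) ↔
      ∀ n (w : Fin n → Fin k), 2 ≤ n → IsMixed w →
        logFunF (Δk k) (εk k).toLinearMap (charOf α).toLinearMap (Ygen ⟨n, w⟩) = 0 := by
  refine ⟨fun hα n w hn hw => ?_, fun hL n => ?_⟩
  · rw [logFunF_Ygen_of_isMixed (fun m v h2 hv _ => hα m v h2 hv) hn hw]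
    exact hα n w hn hw
  · induction n using Nat.strong_induction_on with
    | _ n ih =>
      intro w hn hw
      rw [← logFunF_Ygen_of_isMixed (fun m v h2 hv hm => ih m hm v h2 hv) hn hw]
      exact hL n w hn hw

end LogCoefficients

section Marginals

variable {k : ℕ}

def constWordHom (k : ℕ) (i : Fin k) : Yalg 1 →ₐ[ℂ] Yalg k :=
  MvPolynomial.aeval fun q => Ygen ⟨q.1.1, fun _ => i⟩

lemma constWordHom_Ygen (i : Fin k) {m : ℕ} (v : Fin m → Fin 1) :
    constWordHom k i (Ygen ⟨m, v⟩) = Ygen ⟨m, fun _ => i⟩ := by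
  by_cases h : 2 ≤ m
  · simp [Ygen_of_two_le (p := ⟨m, v⟩) h, constWordHom]
  · rw [Ygen_of_lt_two (p := ⟨m, v⟩) (not_le.1 h), map_one,
      Ygen_of_lt_two (p := ⟨m, fun _ => i⟩) (not_le.1 h)]

lemma constWordHom_Yprod (i : Fin k) {m : ℕ} (v : Fin m → Fin 1) (s : Setoid (Fin m)) :
    constWordHom k i (Yprod v s) = Yprod (fun _ => i) s := by
  simp only [Yprod, map_prod, constWordHom_Ygen]
  rfl

lemma Δk_comp_constWordHom (i : Fin k) :
    (Δk k).comp (constWordHom k i) =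
      (Algebra.TensorProduct.map (constWordHom k i) (constWordHom k i)).comp (Δk 1) := by
  refine MvPolynomial.algHom_ext fun ⟨⟨m, v⟩, h2⟩ => ?_
  have hX := Ygen_of_two_le (p := ⟨m, v⟩) h2
  simp only [AlgHom.comp_apply, ← hX, constWordHom_Ygen, Δk_Ygen h2, map_sum,
    Algebra.TensorProduct.map_tmul, constWordHom_Yprod]

lemma εk_comp_constWordHom (i : Fin k) : (εk k).comp (constWordHom k i) = εk 1 :=
  MvPolynomial.algHom_ext fun ⟨⟨m, v⟩, h2⟩ => by
    rw [AlgHom.comp_apply, ← Ygen_of_two_le (p := ⟨m, v⟩) h2, constWordHom_Ygen,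
      εk_Ygen (p := ⟨m, fun _ => i⟩) h2, εk_Ygen h2]

lemma charOf_comp_constWordHom (α : Dist k) (i : Fin k) :
    (charOf α).comp (constWordHom k i) = charOf (margFam α i) :=
  MvPolynomial.algHom_ext fun ⟨⟨m, v⟩, h2⟩ => by
    rw [AlgHom.comp_apply, ← Ygen_of_two_le (p := ⟨m, v⟩) h2, constWordHom_Ygen,
      charOf_Ygen (p := ⟨m, fun _ => i⟩) _ h2, charOf_Ygen _ h2]
    rfl

lemma logFunF_Ygen_const (α : Dist k) (i : Fin k) (n : ℕ) :
    logFunF (Δk k) (εk k).toLinearMap (charOf α).toLinearMap (Ygen ⟨n, fun _ => i⟩) =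
      logFunF (Δk 1) (εk 1).toLinearMap (charOf (margFam α i)).toLinearMap
        (Ygen ⟨n, fun _ => 0⟩) := by
  rw [← constWordHom_Ygen i, logFunF_comp (Δk_comp_constWordHom i), ← AlgHom.comp_toLinearMap,
    ← AlgHom.comp_toLinearMap, εk_comp_constWordHom, charOf_comp_constWordHom]

end Marginals

theorem LS_separates_variables_iff_free_general (k : ℕ) (α : Dist k) :
    -- (1) ↔ (2)
    ((∀ (n : ℕ) (w : Fin n → Fin k), 2 ≤ n → (¬ ∃ i, ∀ j, w j = i) → α ⟨n, w⟩ = 0) ↔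
      (∃ u : Fin k → ℕ → ℂ, ∀ (n : ℕ), 2 ≤ n →
        (∀ i : Fin k,
          logFunF (Δk k) (εk k).toLinearMap (charOf α).toLinearMap
            (Ygen ⟨n, fun _ => i⟩) = u i n) ∧
        (∀ w : Fin n → Fin k, (¬ ∃ i, ∀ j, w j = i) →
          logFunF (Δk k) (εk k).toLinearMap (charOf α).toLinearMap (Ygen ⟨n, w⟩) = 0))) ∧
    -- (1) ↔ (3)
    ((∀ (n : ℕ) (w : Fin n → Fin k), 2 ≤ n → (¬ ∃ i, ∀ j, w j = i) → α ⟨n, w⟩ = 0) ↔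
      (∀ (n : ℕ), 2 ≤ n →
        (∀ i : Fin k,
          logFunF (Δk k) (εk k).toLinearMap (charOf α).toLinearMap
            (Ygen ⟨n, fun _ => i⟩) =
          logFunF (Δk 1) (εk 1).toLinearMap (charOf (margFam α i)).toLinearMap
            (Ygen ⟨n, fun _ => 0⟩)) ∧
        (∀ w : Fin n → Fin k, (¬ ∃ i, ∀ j, w j = i) →
          logFunF (Δk k) (εk k).toLinearMap (charOf α).toLinearMap (Ygen ⟨n, w⟩) = 0))) := by
  have hfree := isMixed_eq_zero_iff_logFunF_Ygen (α := α)
  refine ⟨⟨fun h => ⟨_, fun n hn => ⟨fun _ => rfl, fun w hw => hfree.1 h n w hn hw⟩⟩, ?_⟩,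
    ⟨fun h n hn => ⟨fun i => logFunF_Ygen_const α i n, fun w hw => hfree.1 h n w hn hw⟩, ?_⟩⟩
  · rintro ⟨u, hu⟩
    exact hfree.2 fun n w hn hw => (hu n hn).2 w hw
  · intro h
    exact hfree.2 fun n w hn hw => (h n hn).2 w hw

/-- Proposition 5.4.  For `μ ∈ G_k` with marginals `μ_i ∈ G_1`
(whose free cumulants are `Cf_{(i,…,i)}(R_μ)`), the following are equivalent:
(1) all mixed coefficients of `R_μ` vanish (free independence);
(2) `LS_μ` separates the variables, `LS_μ = u_1(z_1) + ⋯ + u_k(z_k)`;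
(3) `LS_μ(z_1,…,z_k) = LS_{μ_1}(z_1) + ⋯ + LS_{μ_k}(z_k)`. -/
theorem LS_separates_variables_iff_free (k : ℕ) (hk : 1 ≤ k) (μ α : Dist k)
    (hμ : InG μ) (hα : IsRTransform μ α) :
    -- (1) ↔ (2)
    ((∀ (n : ℕ) (w : Fin n → Fin k), 2 ≤ n → (¬ ∃ i, ∀ j, w j = i) → α ⟨n, w⟩ = 0) ↔
      (∃ u : Fin k → ℕ → ℂ, ∀ (n : ℕ), 2 ≤ n →
        (∀ i : Fin k,
          logFunF (Δk k) (εk k).toLinearMap (charOf α).toLinearMap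
            (Ygen ⟨n, fun _ => i⟩) = u i n) ∧
        (∀ w : Fin n → Fin k, (¬ ∃ i, ∀ j, w j = i) →
          logFunF (Δk k) (εk k).toLinearMap (charOf α).toLinearMap (Ygen ⟨n, w⟩) = 0))) ∧
    -- (1) ↔ (3)
    ((∀ (n : ℕ) (w : Fin n → Fin k), 2 ≤ n → (¬ ∃ i, ∀ j, w j = i) → α ⟨n, w⟩ = 0) ↔
      (∀ (n : ℕ), 2 ≤ n →
        (∀ i : Fin k,
          logFunF (Δk k) (εk k).toLinearMap (charOf α).toLinearMap
            (Ygen ⟨n, fun _ => i⟩) =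
          logFunF (Δk 1) (εk 1).toLinearMap (charOf (margFam α i)).toLinearMap
            (Ygen ⟨n, fun _ => 0⟩)) ∧
        (∀ w : Fin n → Fin k, (¬ ∃ i, ∀ j, w j = i) →
          logFunF (Δk k) (εk k).toLinearMap (charOf α).toLinearMap (Ygen ⟨n, w⟩) = 0))) :=
  LS_separates_variables_iff_free_general k α

end FreeProb

end
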